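/- Let d = 2, let ξ ∈ ℝ² with ξ·e₁ ≠ 0, let A₁ := ξ ⊗ ξ, and let A₂ be symmetric positive definite. Then a > 0 and the homogenized matrix A* is positive definite, i.e. A*x·x > 0 for every nonzero x ∈ ℝ². -/

import Mathlib

/-!
Completing the square in `t` shows that `A* x · x` is the minimum over `t` of the laminate energy
`θ A₁ (x + (1 - θ) t e) · (x + (1 - θ) t e) + (1 - θ) A₂ (x - θ t e) · (x - θ t e)`,
attained at `t = (A₂ - A₁) e · x / a`. Both terms are nonnegative, and the second vanishes only if
`x = θ t e`; the first is then `θ t² A₁ e · e`, which is positive unless `t = 0`, i.e. `x = 0`.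
-/

open Matrix

namespace Matrix

variable {n : Type*} [Fintype n]

theorem IsHermitian.mulVec_dotProduct_comm {A : Matrix n n ℝ} (hA : A.IsHermitian)
    (v w : n → ℝ) : A *ᵥ v ⬝ᵥ w = A *ᵥ w ⬝ᵥ v := by
  rw [dotProduct_comm, dotProduct_mulVec, ← mulVec_transpose, isHermitian_iff_isSymm.mp hA]

theorem PosSemidef.mulVec_dotProduct_self_nonneg {A : Matrix n n ℝ} (hA : A.PosSemidef)
    (x : n → ℝ) : 0 ≤ A *ᵥ x ⬝ᵥ x := by
  simpa [dotProduct_comm] using hA.dotProduct_mulVec_nonneg x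

theorem PosDef.mulVec_dotProduct_self_pos {A : Matrix n n ℝ} (hA : A.PosDef) {x : n → ℝ}
    (hx : x ≠ 0) : 0 < A *ᵥ x ⬝ᵥ x := by
  simpa [dotProduct_comm] using hA.dotProduct_mulVec_pos hx

theorem vecMulVec_self_mulVec_dotProduct (ξ v : n → ℝ) :
    vecMulVec ξ ξ *ᵥ v ⬝ᵥ v = (ξ ⬝ᵥ v) ^ 2 := by
  rw [vecMulVec_mulVec, op_smul_eq_smul, smul_dotProduct, smul_eq_mul, sq]

theorem posSemidef_vecMulVec_self (ξ : n → ℝ) : (vecMulVec ξ ξ).PosSemidef := by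
  simpa using posSemidef_vecMulVec_self_star ξ

end Matrix

variable {n : Type*} [Fintype n]

def homogenizedCoeff (θ : ℝ) (A₁ A₂ : Matrix n n ℝ) (e : n → ℝ) : ℝ :=
  (1 - θ) * (A₁ *ᵥ e ⬝ᵥ e) + θ * (A₂ *ᵥ e ⬝ᵥ e)

noncomputable def homogenizedMatrix (θ : ℝ) (A₁ A₂ : Matrix n n ℝ) (e : n → ℝ) :
    Matrix n n ℝ :=
  θ • A₁ + (1 - θ) • A₂ - (θ * (1 - θ) / homogenizedCoeff θ A₁ A₂ e) •
    vecMulVec ((A₂ - A₁) *ᵥ e) ((A₂ - A₁) *ᵥ e)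

theorem homogenizedCoeff_pos {θ : ℝ} (hθ : θ ∈ Set.Ioo (0 : ℝ) 1) {A₁ A₂ : Matrix n n ℝ}
    {e : n → ℝ} (he : 0 < A₁ *ᵥ e ⬝ᵥ e) (hA₂ : A₂.PosSemidef) :
    0 < homogenizedCoeff θ A₁ A₂ e := by
  have := hA₂.mulVec_dotProduct_self_nonneg e
  unfold homogenizedCoeff
  nlinarith [hθ.1, hθ.2]

theorem isHermitian_homogenizedMatrix {θ : ℝ} {A₁ A₂ : Matrix n n ℝ} (hA₁ : A₁.IsHermitian)
    (hA₂ : A₂.IsHermitian) (e : n → ℝ) : (homogenizedMatrix θ A₁ A₂ e).IsHermitian :=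
  ((hA₁.smul (.all θ)).add (hA₂.smul (.all _))).sub
    ((posSemidef_vecMulVec_self _).isHermitian.smul (.all _))

theorem laminateEnergy_eq_homogenizedMatrix_add_sq {θ : ℝ} {A₁ A₂ : Matrix n n ℝ}
    (hA₁ : A₁.IsHermitian) (hA₂ : A₂.IsHermitian) {e : n → ℝ}
    (ha : homogenizedCoeff θ A₁ A₂ e ≠ 0) (x : n → ℝ) (t : ℝ) :
    θ * (A₁ *ᵥ (x + ((1 - θ) * t) • e) ⬝ᵥ (x + ((1 - θ) * t) • e))
      + (1 - θ) * (A₂ *ᵥ (x - (θ * t) • e) ⬝ᵥ (x - (θ * t) • e)) =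
    homogenizedMatrix θ A₁ A₂ e *ᵥ x ⬝ᵥ x + θ * (1 - θ) * homogenizedCoeff θ A₁ A₂ e *
      (t - (A₂ - A₁) *ᵥ e ⬝ᵥ x / homogenizedCoeff θ A₁ A₂ e) ^ 2 := by
  simp only [homogenizedMatrix, add_mulVec, sub_mulVec, smul_mulVec, vecMulVec_mulVec,
    mulVec_add, mulVec_sub, mulVec_smul, op_smul_eq_smul, add_dotProduct, sub_dotProduct,
    smul_dotProduct, dotProduct_add, dotProduct_sub, dotProduct_smul, smul_eq_mul,
    hA₁.mulVec_dotProduct_comm x e, hA₂.mulVec_dotProduct_comm x e]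
  unfold homogenizedCoeff at *
  field_simp
  ring

theorem homogenizedMatrix_posDef {θ : ℝ} (hθ : θ ∈ Set.Ioo (0 : ℝ) 1) {A₁ A₂ : Matrix n n ℝ}
    (hA₁ : A₁.PosSemidef) (hA₂ : A₂.PosDef) {e : n → ℝ} (he : 0 < A₁ *ᵥ e ⬝ᵥ e) :
    (homogenizedMatrix θ A₁ A₂ e).PosDef := by
  have ha := homogenizedCoeff_pos hθ he hA₂.posSemidef
  refine .of_dotProduct_mulVec_pos
    (isHermitian_homogenizedMatrix hA₁.isHermitian hA₂.isHermitian e) fun x hx => ?_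
  rw [star_trivial, dotProduct_comm]
  set t := (A₂ - A₁) *ᵥ e ⬝ᵥ x / homogenizedCoeff θ A₁ A₂ e
  have energy := laminateEnergy_eq_homogenizedMatrix_add_sq hA₁.isHermitian
    hA₂.isHermitian ha.ne' x t
  rw [sub_self, zero_pow two_ne_zero, mul_zero, add_zero] at energy
  rw [← energy]
  have q₁ := hA₁.mulVec_dotProduct_self_nonneg (x + ((1 - θ) * t) • e)
  by_cases hy : x - (θ * t) • e = 0
  · have hx' : x = (θ * t) • e := sub_eq_zero.mp hy
    have ht : t ≠ 0 := fun h => hx (by rw [hx', h, mul_zero, zero_smul])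
    have hy' : x + ((1 - θ) * t) • e = t • e := by rw [hx', ← add_smul]; ring_nf
    rw [hy, hy', mulVec_zero, dotProduct_zero, mul_zero, add_zero, mulVec_smul,
      smul_dotProduct, dotProduct_smul, smul_eq_mul, smul_eq_mul]
    nlinarith [mul_pos (mul_pos hθ.1 (sq_pos_of_ne_zero ht)) he]
  · exact add_pos_of_nonneg_of_pos (mul_nonneg hθ.1.le q₁)
      (mul_pos (sub_pos.2 hθ.2) (hA₂.mulVec_dotProduct_self_pos hy))

theorem homogenized_matrix_posDef_dim2_general
    (θ : ℝ) (hθ : θ ∈ Set.Ioo (0 : ℝ) 1)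
    (ξ : Fin 2 → ℝ)
    (e₁ : Fin 2 → ℝ)
    (hξ : ξ ⬝ᵥ e₁ ≠ 0)
    (A₁ A₂ : Matrix (Fin 2) (Fin 2) ℝ)
    (hA₁ : A₁ = vecMulVec ξ ξ) (hA₂ : A₂.PosDef)
    (a : ℝ)
    (ha_def : a = (1 - θ) * (A₁.mulVec e₁ ⬝ᵥ e₁) + θ * (A₂.mulVec e₁ ⬝ᵥ e₁))
    (Astar : Matrix (Fin 2) (Fin 2) ℝ)
    (hAstar : Astar = θ • A₁ + (1 - θ) • A₂
      - (θ * (1 - θ) / a) • vecMulVec ((A₂ - A₁).mulVec e₁) ((A₂ - A₁).mulVec e₁)) :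
    0 < a ∧ ∀ x : Fin 2 → ℝ, x ≠ 0 → 0 < Astar.mulVec x ⬝ᵥ x := by
  subst hA₁ ha_def hAstar
  have he : 0 < vecMulVec ξ ξ *ᵥ e₁ ⬝ᵥ e₁ := by
    rw [vecMulVec_self_mulVec_dotProduct]
    exact sq_pos_of_ne_zero hξ
  exact ⟨homogenizedCoeff_pos hθ he hA₂.posSemidef, fun x hx =>
    (homogenizedMatrix_posDef hθ (posSemidef_vecMulVec_self ξ) hA₂ he).mulVec_dotProduct_self_pos hx⟩

/-- In dimension two, with `A₁ = ξ ⊗ ξ` where `ξ·e₁ ≠ 0` and `A₂` symmetric positive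
definite, one has `a > 0` and the homogenized matrix `A*` is positive definite. -/
theorem homogenized_matrix_posDef_dim2
    (θ : ℝ) (hθ : θ ∈ Set.Ioo (0 : ℝ) 1)
    (ξ : Fin 2 → ℝ)
    (e₁ : Fin 2 → ℝ) (he₁ : e₁ = Pi.single 0 1)
    (hξ : ξ ⬝ᵥ e₁ ≠ 0)
    (A₁ A₂ : Matrix (Fin 2) (Fin 2) ℝ)
    (hA₁ : A₁ = vecMulVec ξ ξ) (hA₂ : A₂.PosDef)
    (a : ℝ)
    (ha_def : a = (1 - θ) * (A₁.mulVec e₁ ⬝ᵥ e₁) + θ * (A₂.mulVec e₁ ⬝ᵥ e₁))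
    (Astar : Matrix (Fin 2) (Fin 2) ℝ)
    (hAstar : Astar = θ • A₁ + (1 - θ) • A₂
      - (θ * (1 - θ) / a) • vecMulVec ((A₂ - A₁).mulVec e₁) ((A₂ - A₁).mulVec e₁)) :
    0 < a ∧ ∀ x : Fin 2 → ℝ, x ≠ 0 → 0 < Astar.mulVec x ⬝ᵥ x :=
  homogenized_matrix_posDef_dim2_general θ hθ ξ e₁ hξ A₁ A₂ hA₁ hA₂ a ha_def Astar hAstar
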